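/- Define Ext_DBdC(𝒜): B ∈ Ext_DBdC(𝒜) iff either some f ∈ B has f ⪈ 0, or there exist A₁,…,Aₙ ∈ 𝒜 such that for each (g₁,…,gₙ) ∈ A₁×…×Aₙ with 0 ∉ desext({g₁,…,gₙ}), there exist f ∈ B and h ∈ posi({g₁,…,gₙ}) with f ≥ h. Then for nonempty 𝒜, Ext_DBdC(𝒜) = Ext(𝒜), where B ∈ Ext(𝒜) iff there exist A₁,…,Aₙ ∈ 𝒜 such that for each (g₁,…,gₙ) ∈ A₁×…×Aₙ with 0 ∉ desext({g₁,…,gₙ}), some f ∈ B lies in desext({g₁,…,gₙ}). -/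

import Mathlib

open scoped BigOperators

universe u v

def GambleSpace (Ω : Type v) : Submodule ℝ (Ω → ℝ) where
  carrier := {f | ∃ M, ∀ ω, |f ω| ≤ M}
  add_mem' := by
    rintro f g ⟨M, hM⟩ ⟨N, hN⟩
    exact ⟨M + N, fun ω => (abs_add_le _ _).trans (add_le_add (hM ω) (hN ω))⟩
  zero_mem' := ⟨0, fun ω => by simp⟩
  smul_mem' := by
    rintro c f ⟨M, hM⟩
    exact ⟨|c| * M, fun ω => by
      simpa [abs_mul] using mul_le_mul_of_nonneg_left (hM ω) (abs_nonneg c)⟩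

/-- The type of gambles: bounded functions `Ω → ℝ`. -/
abbrev Gamble (Ω : Type v) := GambleSpace Ω

/-- Pointwise order on gambles: `gle f g` means `f ≤ g` pointwise. -/
def gle {Ω : Type v} (f g : Gamble Ω) : Prop := ∀ ω, (f : Ω → ℝ) ω ≤ (g : Ω → ℝ) ω

/-- Gambles weakly dominating `0`. -/
def Gpos (Ω : Type v) : Set (Gamble Ω) := {g | gle 0 g ∧ g ≠ 0}

/-- Positive linear hull: finite positive combinations of members of `B`. -/
def posi {Ω : Type v} (B : Set (Gamble Ω)) : Set (Gamble Ω) :=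
  {f | ∃ n : ℕ, 0 < n ∧ ∃ (l : Fin n → ℝ) (g : Fin n → Gamble Ω),
    (∀ i, 0 < l i) ∧ (∀ i, g i ∈ B) ∧ f = ∑ i, l i • g i}

/-- Natural extension of a set of gambles. -/
def desext {Ω : Type v} (E : Set (Gamble Ω)) : Set (Gamble Ω) := posi (E ∪ Gpos Ω)

/-- Coherence for a set of desirable gambles. -/
def CoherentD {Ω : Type v} (D : Set (Gamble Ω)) : Prop :=
  (0 : Gamble Ω) ∉ D ∧ Gpos Ω ⊆ D ∧
  (∀ g ∈ D, ∀ l : ℝ, 0 < l → l • g ∈ D) ∧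
  (∀ f ∈ D, ∀ g ∈ D, f + g ∈ D)

/-- Coherence for a set of desirable gamble sets. -/
def CoherentK {Ω : Type v} (K : Set (Set (Gamble Ω))) : Prop :=
  (∅ : Set (Gamble Ω)) ∉ K ∧
  (∀ A ∈ K, A \ {0} ∈ K) ∧
  (∀ g ∈ Gpos Ω, ({g} : Set (Gamble Ω)) ∈ K) ∧
  (∀ A ∈ K, ∀ B : Set (Gamble Ω), A ⊆ B → B ∈ K) ∧
  (∀ A ∈ K, ∀ F : Gamble Ω → Gamble Ω, (∀ g ∈ A, gle g (F g)) → F '' A ∈ K) ∧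
  (∀ n : ℕ, 0 < n → ∀ A : Fin n → Set (Gamble Ω), (∀ i, A i ∈ K) →
    ∀ F : (Fin n → Gamble Ω) → Gamble Ω,
    (∀ g : Fin n → Gamble Ω, (∀ i, g i ∈ A i) → F g ∈ posi (Set.range g)) →
    {b | ∃ g : Fin n → Gamble Ω, (∀ i, g i ∈ A i) ∧ b = F g} ∈ K)

/-- The infinite addition axiom. -/
def KAddInf {Ω : Type v} (K : Set (Set (Gamble Ω))) : Prop :=
  ∀ (I : Type v) (A : I → Set (Gamble Ω)), (∀ i, A i ∈ K) →
    ∀ F : (I → Gamble Ω) → Gamble Ω,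
    (∀ g : I → Gamble Ω, (∀ i, g i ∈ A i) → F g ∈ posi (Set.range g)) →
    {b | ∃ g : I → Gamble Ω, (∀ i, g i ∈ A i) ∧ b = F g} ∈ K

/-- Natural extension of a set of gamble sets (nonempty case). -/
def ExtK {Ω : Type v} (𝒜 : Set (Set (Gamble Ω))) : Set (Set (Gamble Ω)) :=
  {B | ∃ n : ℕ, 0 < n ∧ ∃ A : Fin n → Set (Gamble Ω), (∀ i, A i ∈ 𝒜) ∧
    ∀ g : Fin n → Gamble Ω, (∀ i, g i ∈ A i) →
      (0 : Gamble Ω) ∉ desext (Set.range g) → ∃ f ∈ B, f ∈ desext (Set.range g)}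


/-!
A gamble lies in `desext E = posi (E ∪ G₊)` exactly when it is itself in `G₊` or it dominates an
element of `posi E`: the gambles of that form contain `E ∪ G₊` and are closed under positive
scaling and addition, hence contain `posi (E ∪ G₊)`, and conversely `f = h + (f - h)` with
`f - h ⪈ 0` whenever `h ≤ f` and `h ≠ f`. Substituting this description of `desext` into the
defining condition of `ExtK`, the disjunct `∃ f ∈ B, f ⪈ 0` can be pulled out of the quantifiers
over `A` and `g`, because it does not depend on them; this uses `𝒜 ≠ ∅` to supply some `A`.
-/

section Posi

variable {Ω : Type v}

lemma subset_posi (B : Set (Gamble Ω)) : B ⊆ posi B := fun x hx =>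
  ⟨1, one_pos, fun _ => 1, fun _ => x, fun _ => one_pos, fun _ => hx, by simp⟩

lemma posi_mono {B C : Set (Gamble Ω)} (h : B ⊆ C) : posi B ⊆ posi C := by
  rintro f ⟨n, hn, l, g, hl, hg, rfl⟩
  exact ⟨n, hn, l, g, hl, fun i => h (hg i), rfl⟩

lemma smul_mem_posi {B : Set (Gamble Ω)} {c : ℝ} (hc : 0 < c) {f : Gamble Ω} (hf : f ∈ posi B) :
    c • f ∈ posi B := by
  obtain ⟨n, hn, l, g, hl, hg, rfl⟩ := hf
  refine ⟨n, hn, fun i => c * l i, g, fun i => mul_pos hc (hl i), hg, ?_⟩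
  simp only [Finset.smul_sum, smul_smul]

lemma add_mem_posi {B : Set (Gamble Ω)} {f f' : Gamble Ω} (hf : f ∈ posi B) (hf' : f' ∈ posi B) :
    f + f' ∈ posi B := by
  obtain ⟨n, hn, l, g, hl, hg, rfl⟩ := hf
  obtain ⟨m, -, l', g', hl', hg', rfl⟩ := hf'
  refine ⟨n + m, by omega, Fin.append l l', Fin.append g g', Fin.addCases (by simpa) (by simpa),
    Fin.addCases (by simpa) (by simpa), ?_⟩
  simp [Fin.sum_univ_add]

lemma posi_subset {B C : Set (Gamble Ω)} (hBC : B ⊆ C)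
    (hsmul : ∀ c : ℝ, 0 < c → ∀ x ∈ C, c • x ∈ C) (hadd : ∀ x ∈ C, ∀ y ∈ C, x + y ∈ C) :
    posi B ⊆ C := by
  have key : ∀ (n : ℕ) (l : Fin (n + 1) → ℝ) (g : Fin (n + 1) → Gamble Ω),
      (∀ i, 0 < l i) → (∀ i, g i ∈ B) → ∑ i, l i • g i ∈ C := by
    intro n
    induction n with
    | zero => intro l g hl hg; simpa using hsmul _ (hl 0) _ (hBC (hg 0))
    | succ n ih =>
      intro l g hl hg
      rw [Fin.sum_univ_succ]
      exact hadd _ (hsmul _ (hl 0) _ (hBC (hg 0))) _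
        (ih _ _ (fun i => hl i.succ) (fun i => hg i.succ))
  rintro _ ⟨n, hn, l, g, hl, hg, rfl⟩
  obtain ⟨n, rfl⟩ := Nat.exists_eq_succ_of_ne_zero hn.ne'
  exact key n l g hl hg

end Posi

section Order

variable {Ω : Type v}

lemma gle_add {a b c d : Gamble Ω} (hab : gle a b) (hcd : gle c d) : gle (a + c) (b + d) :=
  fun ω => by simpa using add_le_add (hab ω) (hcd ω)

lemma gle_smul {a b : Gamble Ω} {c : ℝ} (hc : 0 ≤ c) (hab : gle a b) : gle (c • a) (c • b) :=
  fun ω => by simpa using mul_le_mul_of_nonneg_left (hab ω) hc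

lemma sub_mem_Gpos {f h : Gamble Ω} (hhf : gle h f) (hne : f ≠ h) : f - h ∈ Gpos Ω :=
  ⟨fun ω => by simpa using hhf ω, sub_ne_zero.mpr hne⟩

lemma smul_mem_Gpos {f : Gamble Ω} {c : ℝ} (hc : 0 < c) (hf : f ∈ Gpos Ω) : c • f ∈ Gpos Ω :=
  ⟨by simpa using gle_smul hc.le hf.1, smul_ne_zero hc.ne' hf.2⟩

lemma add_mem_Gpos {f f' : Gamble Ω} (hf : f ∈ Gpos Ω) (hf' : f' ∈ Gpos Ω) :
    f + f' ∈ Gpos Ω := by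
  refine ⟨by simpa using gle_add hf.1 hf'.1, fun hsum => hf.2 (Subtype.ext (funext fun ω => ?_))⟩
  have hsum_ω : (f : Ω → ℝ) ω + (f' : Ω → ℝ) ω = 0 := by
    simpa using congrFun (congrArg Subtype.val hsum) ω
  have hf_ω : 0 ≤ (f : Ω → ℝ) ω := by simpa using hf.1 ω
  have hf'_ω : 0 ≤ (f' : Ω → ℝ) ω := by simpa using hf'.1 ω
  simp only [ZeroMemClass.coe_zero, Pi.zero_apply]
  linarith

end Order

lemma mem_desext_iff {Ω : Type v} {E : Set (Gamble Ω)} {f : Gamble Ω} :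
    f ∈ desext E ↔ f ∈ Gpos Ω ∨ ∃ h ∈ posi E, gle h f := by
  constructor
  · refine fun hf => posi_subset (C := {x | x ∈ Gpos Ω ∨ ∃ h ∈ posi E, gle h x}) ?_ ?_ ?_ hf
    · rintro x (hx | hx)
      · exact Or.inr ⟨x, subset_posi E hx, fun _ => le_rfl⟩
      · exact Or.inl hx
    · rintro c hc x (hx | ⟨h, hh, hhx⟩)
      · exact Or.inl (smul_mem_Gpos hc hx)
      · exact Or.inr ⟨c • h, smul_mem_posi hc hh, gle_smul hc.le hhx⟩
    · rintro x (hx | ⟨h, hh, hhx⟩) y (hy | ⟨h', hh', hhy⟩)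
      · exact Or.inl (add_mem_Gpos hx hy)
      · exact Or.inr ⟨h', hh', by simpa using gle_add hx.1 hhy⟩
      · exact Or.inr ⟨h, hh, by simpa using gle_add hhx hy.1⟩
      · exact Or.inr ⟨h + h', add_mem_posi hh hh', gle_add hhx hhy⟩
  · rintro (hf | ⟨h, hh, hhf⟩)
    · exact subset_posi _ (Or.inr hf)
    by_cases hfh : f = h
    · exact hfh ▸ posi_mono Set.subset_union_left hh
    rw [← add_sub_cancel h f]
    exact add_mem_posi (posi_mono Set.subset_union_left hh)
      (subset_posi _ (Or.inr (sub_mem_Gpos hhf hfh)))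

theorem stmt19_general {Ω : Type v} (𝒜 : Set (Set (Gamble Ω))) (h𝒜 : 𝒜.Nonempty) :
    {B : Set (Gamble Ω) |
      (∃ f ∈ B, f ∈ Gpos Ω) ∨
      (∃ n : ℕ, 0 < n ∧ ∃ A : Fin n → Set (Gamble Ω), (∀ i, A i ∈ 𝒜) ∧
        ∀ g : Fin n → Gamble Ω, (∀ i, g i ∈ A i) →
          (0 : Gamble Ω) ∉ desext (Set.range g) →
          ∃ f ∈ B, ∃ h ∈ posi (Set.range g), gle h f)} = ExtK 𝒜 := by
  ext B
  simp only [Set.mem_ofPred_eq, ExtK, mem_desext_iff]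
  constructor
  · rintro (⟨f, hfB, hf⟩ | ⟨n, hn, A, hA, hB⟩)
    · obtain ⟨A, hA⟩ := h𝒜
      exact ⟨1, one_pos, fun _ => A, fun _ => hA, fun _ _ _ => ⟨f, hfB, Or.inl hf⟩⟩
    · refine ⟨n, hn, A, hA, fun g hg h0 => ?_⟩
      obtain ⟨f, hfB, hf⟩ := hB g hg h0
      exact ⟨f, hfB, Or.inr hf⟩
  · rintro ⟨n, hn, A, hA, hB⟩
    by_cases hpos : ∃ f ∈ B, f ∈ Gpos Ω
    · exact Or.inl hpos
    refine Or.inr ⟨n, hn, A, hA, fun g hg h0 => ?_⟩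
    obtain ⟨f, hfB, hf | hf⟩ := hB g hg h0
    · exact absurd ⟨f, hfB, hf⟩ hpos
    · exact ⟨f, hfB, hf⟩

theorem stmt19 {Ω : Type v} [Nonempty Ω] (𝒜 : Set (Set (Gamble Ω))) (h𝒜 : 𝒜.Nonempty) :
    {B : Set (Gamble Ω) |
      (∃ f ∈ B, f ∈ Gpos Ω) ∨
      (∃ n : ℕ, 0 < n ∧ ∃ A : Fin n → Set (Gamble Ω), (∀ i, A i ∈ 𝒜) ∧
        ∀ g : Fin n → Gamble Ω, (∀ i, g i ∈ A i) →
          (0 : Gamble Ω) ∉ desext (Set.range g) →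
          ∃ f ∈ B, ∃ h ∈ posi (Set.range g), gle h f)} = ExtK 𝒜 :=
  stmt19_general 𝒜 h𝒜
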